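/- For fixed reduced fraction c = p/q ∈ (0,1), the total number w(n, c) of binary vectors y ∈ {0,1}^n with both classes nonempty achieving AUC = c equals Σ_{n₁ ∈ 𝒩₁} v(n - n₁, n₁, (q-p)(n-n₁)n₁/q), where 𝒩₁ = {n₁ : 0 < n₁ < n and q divides (n - n₁)n₁}, and the sets of vectors for distinct n₁ ∈ 𝒩₁ are pairwise disjoint. -/

import Mathlib

open scoped Classical

/-- Number of misclassified pairs: `h(y) = |{(i,j) : yᵢ = 0, yⱼ = 1, i > j}|`. -/
def hcount {n : ℕ} (y : Fin n → Bool) : ℕ :=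
  (Finset.univ.filter (fun ij : Fin n × Fin n =>
      y ij.1 = false ∧ y ij.2 = true ∧ ij.2 < ij.1)).card

/-- Number of ones of a binary vector. -/
def ones {n : ℕ} (y : Fin n → Bool) : ℕ :=
  (Finset.univ.filter (fun i => y i = true)).card

/-- `v(n₀, n₁, d)` = number of binary vectors of length `n₀ + n₁` with exactly
`n₁` ones and `h`-value `d`. -/
def v (n₀ n₁ d : ℕ) : ℕ :=
  (Finset.univ.filter (fun y : Fin (n₀ + n₁) → Bool =>
      ones y = n₁ ∧ hcount y = d)).card

/-!
Fix the number `n₁` of ones, so that `n₀ = n - n₁` and `m = n₀ n₁ > 0`. Then `AUC = p/q` reads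
`h q = (q - p) m`; since `q - p` is coprime to `q`, this holds iff `q ∣ m` and `h = (q - p) m / q`.
Summing over `n₁` the vectors with this prescribed `h` gives the formula, and the classes for
distinct `n₁` are disjoint because `n₁` is the number of ones.
-/

open Finset

lemma v_eq_card_filter {n₀ n₁ n : ℕ} (d : ℕ) (h : n₀ + n₁ = n) :
    v n₀ n₁ d = #{y : Fin n → Bool | ones y = n₁ ∧ hcount y = d} := by
  subst h; rfl

lemma one_sub_div_eq_div_iff {h m p q : ℕ} (hm : m ≠ 0) (hpq : p ≤ q) (hq : q ≠ 0) :
    (1 : ℚ) - h / m = p / q ↔ h * q = (q - p) * m := by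
  rw [← Nat.cast_inj (R := ℚ)]
  push_cast [hpq]
  field_simp
  constructor <;> intro H <;> linarith

lemma mul_eq_mul_iff_dvd_and_eq_div {h m r q : ℕ} (hrq : r.Coprime q) (hq : 0 < q) :
    h * q = r * m ↔ q ∣ m ∧ h = r * m / q := by
  constructor
  · intro H
    have hqm : q ∣ m := hrq.symm.dvd_of_dvd_mul_left ⟨h, by rw [← H, mul_comm]⟩
    exact ⟨hqm, by rw [← H, Nat.mul_div_cancel _ hq]⟩
  · rintro ⟨⟨k, rfl⟩, rfl⟩
    exact Nat.div_mul_cancel ⟨r * k, by ring⟩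

lemma card_filter_eq_sum_v {n : ℕ} (P : (Fin n → Bool) → Prop) [DecidablePred P]
    (N : Finset ℕ) (d : ℕ → ℕ) (hN : ∀ k ∈ N, k ≤ n)
    (hP : ∀ y, P y ↔ ones y ∈ N ∧ hcount y = d (ones y)) :
    #{y | P y} = ∑ k ∈ N, v (n - k) k (d k) := by
  rw [card_eq_sum_card_fiberwise (f := ones) (t := N)
    fun y hy => ((hP y).1 (mem_filter.1 hy).2).1]
  refine sum_congr rfl fun k hk => ?_
  rw [v_eq_card_filter _ (Nat.sub_add_cancel (hN k hk))]
  congr 1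
  ext y
  simp only [mem_filter, mem_univ, true_and, hP]
  constructor
  · rintro ⟨⟨-, hy⟩, rfl⟩
    exact ⟨rfl, hy⟩
  · rintro ⟨rfl, hy⟩
    exact ⟨⟨hk, hy⟩, rfl⟩

theorem w_eq_sum_v_general (n p q : ℕ) (hpq : p < q) (hcop : Nat.Coprime p q)
    (N₁ : Finset ℕ)
    (hN₁ : N₁ = (Finset.range n).filter (fun n₁ => 0 < n₁ ∧ q ∣ (n - n₁) * n₁))
    (auc : (Fin n → Bool) → Prop)
    (hauc : ∀ y, auc y ↔
      (1 : ℚ) - (hcount y : ℚ) / (((n - ones y) * ones y : ℕ) : ℚ) = (p : ℚ) / (q : ℚ))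
    (S : ℕ → Finset (Fin n → Bool))
    (hS : ∀ n₁, S n₁ = Finset.univ.filter (fun y => ones y = n₁ ∧ auc y)) :
    (Finset.univ.filter (fun y : Fin n → Bool =>
        0 < ones y ∧ ones y < n ∧ auc y)).card
      = (∑ n₁ ∈ N₁, v (n - n₁) n₁ ((q - p) * ((n - n₁) * n₁) / q))
    ∧ ∀ a ∈ N₁, ∀ b ∈ N₁, a ≠ b → Disjoint (S a) (S b) := by
  have hq : 0 < q := pos_of_gt hpq
  have hauc_iff : ∀ y, 0 < ones y → ones y < n → (auc y ↔
      q ∣ (n - ones y) * ones y ∧ hcount y = (q - p) * ((n - ones y) * ones y) / q) := by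
    intro y h0 hn
    rw [hauc, one_sub_div_eq_div_iff (Nat.mul_pos (Nat.sub_pos_of_lt hn) h0).ne' hpq.le hq.ne',
      mul_eq_mul_iff_dvd_and_eq_div ((Nat.coprime_self_sub_left hpq.le).2 hcop) hq]
  subst hN₁
  refine ⟨card_filter_eq_sum_v _ _ _ (fun k hk => (mem_range.1 (mem_filter.1 hk).1).le)
    fun y => ?_, fun a _ b _ hab => ?_⟩
  · simp only [mem_filter, mem_range]
    constructor
    · rintro ⟨h0, hn, hy⟩
      exact ⟨⟨hn, h0, ((hauc_iff y h0 hn).1 hy).1⟩, ((hauc_iff y h0 hn).1 hy).2⟩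
    · rintro ⟨⟨hn, h0, hd⟩, hh⟩
      exact ⟨h0, hn, (hauc_iff y h0 hn).2 ⟨hd, hh⟩⟩
  · rw [hS, hS]
    exact disjoint_filter.2 fun y _ ha hb => hab (ha.1.symm.trans hb.1)

/-- For a reduced fraction `c = p/q ∈ (0,1)`, the total number `w(n, c)` of
binary vectors with both classes nonempty achieving `AUC = 1 - h/(n₀n₁) = p/q`
equals `∑_{n₁ ∈ 𝒩₁} v(n - n₁, n₁, (q-p)(n-n₁)n₁/q)` where
`𝒩₁ = {n₁ : 0 < n₁ < n ∧ q ∣ (n-n₁)n₁}`, and the sets of vectors for distinct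
`n₁ ∈ 𝒩₁` are pairwise disjoint. -/
theorem w_eq_sum_v (n p q : ℕ) (hp : 0 < p) (hpq : p < q) (hcop : Nat.Coprime p q)
    (N₁ : Finset ℕ)
    (hN₁ : N₁ = (Finset.range n).filter (fun n₁ => 0 < n₁ ∧ q ∣ (n - n₁) * n₁))
    (auc : (Fin n → Bool) → Prop)
    (hauc : ∀ y, auc y ↔
      (1 : ℚ) - (hcount y : ℚ) / (((n - ones y) * ones y : ℕ) : ℚ) = (p : ℚ) / (q : ℚ))
    (S : ℕ → Finset (Fin n → Bool))
    (hS : ∀ n₁, S n₁ = Finset.univ.filter (fun y => ones y = n₁ ∧ auc y)) :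
    (Finset.univ.filter (fun y : Fin n → Bool =>
        0 < ones y ∧ ones y < n ∧ auc y)).card
      = (∑ n₁ ∈ N₁, v (n - n₁) n₁ ((q - p) * ((n - n₁) * n₁) / q))
    ∧ ∀ a ∈ N₁, ∀ b ∈ N₁, a ≠ b → Disjoint (S a) (S b) :=
  w_eq_sum_v_general n p q hpq hcop N₁ hN₁ auc hauc S hS
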